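/- Let x ∈ C³(U,ℝ³) be a conformal immersion on an open set U ⊂ ℝ², i.e. |x_u| = |x_v|, x_u·x_v = 0 and W := |x_u|² > 0 on U. With N := W⁻¹x_u∧x_v, h_jk := x_{u^j u^k}·N (u¹ = u, u² = v) and mean curvature H := (h₁₁+h₂₂)/(2W), the Codazzi–Mainardi equations hold in the form ∂_v h₂₁ − ∂_u h₂₂ + W_u H = 0 and ∂_v h₁₁ − ∂_u h₁₂ − W_v H = 0 on U. -/

import Mathlib

noncomputable section

open Real Set MeasureTheory Filter NNReal

/-- Points of `ℝ³`, realized as functions `Fin 3 → ℝ`. -/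
abbrev R3 : Type := Fin 3 → ℝ

/-- The Euclidean inner product on `ℝ³`. -/
def dot3 (a b : R3) : ℝ := a 0 * b 0 + a 1 * b 1 + a 2 * b 2

/-- The cross product on `ℝ³`. -/
def cross3 (a b : R3) : R3 :=
  ![a 1 * b 2 - a 2 * b 1, a 2 * b 0 - a 0 * b 2, a 0 * b 1 - a 1 * b 0]

/-- The Euclidean norm on `ℝ³`. -/
def norm3 (a : R3) : ℝ := Real.sqrt (dot3 a a)

/-- The upper half disc `B⁺`. -/
def Bplus : Set (ℝ × ℝ) := {w | w.1 ^ 2 + w.2 ^ 2 < 1 ∧ 0 < w.2}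

/-- Partial derivative in the `u`-direction of a vector-valued map. -/
def du (x : ℝ × ℝ → R3) (w : ℝ × ℝ) : R3 := fderiv ℝ x w ((1 : ℝ), (0 : ℝ))

/-- Partial derivative in the `v`-direction of a vector-valued map. -/
def dv (x : ℝ × ℝ → R3) (w : ℝ × ℝ) : R3 := fderiv ℝ x w ((0 : ℝ), (1 : ℝ))

/-- Partial derivative in the `u`-direction of a scalar function. -/
def duS (f : ℝ × ℝ → ℝ) (w : ℝ × ℝ) : ℝ := fderiv ℝ f w ((1 : ℝ), (0 : ℝ))

/-- Partial derivative in the `v`-direction of a scalar function. -/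
def dvS (f : ℝ × ℝ → ℝ) (w : ℝ × ℝ) : ℝ := fderiv ℝ f w ((0 : ℝ), (1 : ℝ))

/-- The area element `W = |x_u ∧ x_v|`. -/
def Wf (x : ℝ × ℝ → R3) (w : ℝ × ℝ) : ℝ := norm3 (cross3 (du x w) (dv x w))

/-- The unit normal `N = W⁻¹ x_u ∧ x_v`. -/
def Nf (x : ℝ × ℝ → R3) (w : ℝ × ℝ) : R3 := (Wf x w)⁻¹ • cross3 (du x w) (dv x w)

/-- Coefficient `h₁₁ = x_uu · N` of the second fundamental form. -/
def h11 (x : ℝ × ℝ → R3) (w : ℝ × ℝ) : ℝ := dot3 (du (du x) w) (Nf x w)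

/-- Coefficient `h₁₂ = x_uv · N` of the second fundamental form. -/
def h12 (x : ℝ × ℝ → R3) (w : ℝ × ℝ) : ℝ := dot3 (dv (du x) w) (Nf x w)

/-- Coefficient `h₂₁ = x_vu · N` of the second fundamental form. -/
def h21 (x : ℝ × ℝ → R3) (w : ℝ × ℝ) : ℝ := dot3 (du (dv x) w) (Nf x w)

/-- Coefficient `h₂₂ = x_vv · N` of the second fundamental form. -/
def h22 (x : ℝ × ℝ → R3) (w : ℝ × ℝ) : ℝ := dot3 (dv (dv x) w) (Nf x w)

/-- The Gaussian curvature `K = (h₁₁h₂₂ − h₁₂²)/W²`. -/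
def Kg (x : ℝ × ℝ → R3) (w : ℝ × ℝ) : ℝ :=
  (h11 x w * h22 x w - (h12 x w) ^ 2) / (Wf x w) ^ 2

/-- The spatial gradient of a function on `ℝ³`. -/
def grad3 (H : R3 → ℝ) (p : R3) : R3 := fun i => fderiv ℝ H p (Pi.single i 1)

/-- The divergence of a vector field on `ℝ³`. -/
def divQ (Q : R3 → R3) (p : R3) : ℝ :=
  fderiv ℝ Q p (Pi.single 0 1) 0 + fderiv ℝ Q p (Pi.single 1 1) 1 +
    fderiv ℝ Q p (Pi.single 2 1) 2

/-- `x` is a surface of prescribed mean curvature `H` on `B⁺`: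
`Δx = 2H(x) x_u∧x_v` together with the conformality relations. -/
def IsHSurface (H : R3 → ℝ) (x : ℝ × ℝ → R3) : Prop :=
  ∀ w ∈ Bplus,
    du (du x) w + dv (dv x) w = (2 * H (x w)) • cross3 (du x w) (dv x w) ∧
    dot3 (du x w) (du x w) = dot3 (dv x w) (dv x w) ∧
    dot3 (du x w) (dv x w) = 0

/-- The mean curvature `H = (h₁₁ + h₂₂)/(2W)` of a conformal immersion. -/
def Hmean (x : ℝ × ℝ → R3) (w : ℝ × ℝ) : ℝ := (h11 x w + h22 x w) / (2 * Wf x w)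

/-! Differentiating `h₁₁ = x_uu · N` and `h₁₂ = x_uv · N`, the third derivatives cancel by
Schwarz's theorem, so `∂_v h₁₁ − ∂_u h₁₂ = x_uu · N_v − x_uv · N_u`. Differentiating `N · N = 1`
and `N · x_u = N · x_v = 0` gives the Weingarten equations `W N_u = −h₁₁ x_u − h₂₁ x_v` and
`W N_v = −h₁₂ x_u − h₂₂ x_v`, and differentiating `W = |x_u|² = |x_v|²`, `x_u · x_v = 0` expresses
every `x_jk · x_l` through `W_u` and `W_v`. Substituting, and using `h₁₂ = h₂₁`, the right-hand
side becomes `W_v H`; the other equation is the same computation. -/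

open Topology

lemma dot3_comm (a b : R3) : dot3 a b = dot3 b a := by
  unfold dot3; ring

lemma dot3_smul_right (r : ℝ) (a b : R3) : dot3 a (r • b) = r * dot3 a b := by
  simp only [dot3, Pi.smul_apply, smul_eq_mul]; ring

lemma dot3_smul_left (r : ℝ) (a b : R3) : dot3 (r • a) b = r * dot3 a b := by
  simp only [dot3, Pi.smul_apply, smul_eq_mul]; ring

lemma dot3_cross3_self_left (p q : R3) : dot3 p (cross3 p q) = 0 := by
  simp only [dot3, cross3, Matrix.cons_val]; ring

lemma dot3_cross3_self_right (p q : R3) : dot3 q (cross3 p q) = 0 := by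
  simp only [dot3, cross3, Matrix.cons_val]; ring

lemma dot3_cross3_cross3 (p q : R3) :
    dot3 (cross3 p q) (cross3 p q) = dot3 p p * dot3 q q - dot3 p q ^ 2 := by
  simp only [dot3, cross3, Matrix.cons_val]; ring

-- `v` expanded in the frame `p, q, p × q`, then paired with `z`.
lemma dot3_cross3_self_mul_dot3 (p q v z : R3) :
    dot3 (cross3 p q) (cross3 p q) * dot3 z v =
      dot3 z p * (dot3 v p * dot3 q q - dot3 v q * dot3 p q) +
        dot3 z q * (dot3 v q * dot3 p p - dot3 v p * dot3 p q) +
        dot3 z (cross3 p q) * dot3 v (cross3 p q) := by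
  simp only [dot3, cross3, Matrix.cons_val]; ring

def dot3L : R3 →L[ℝ] R3 →L[ℝ] ℝ := (dotProductBilin ℝ ℝ).toContinuousBilinearMap

lemma dot3L_apply (a b : R3) : dot3L a b = dot3 a b := by
  simp only [dot3L, LinearMap.toContinuousBilinearMap_apply, dotProductBilin_apply_apply,
    dotProduct, Fin.sum_univ_three, dot3]

def cross3L : R3 →L[ℝ] R3 →L[ℝ] R3 := crossProduct.toContinuousBilinearMap

section Calculus

variable {E : Type*} [NormedAddCommGroup E] [NormedSpace ℝ E] {F G : E → R3} {w : E}

lemma DifferentiableAt.dot3 (hF : DifferentiableAt ℝ F w) (hG : DifferentiableAt ℝ G w) :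
    DifferentiableAt ℝ (fun y => dot3 (F y) (G y)) w := by
  simpa only [dot3L_apply] using
    (dot3L.hasFDerivAt_of_bilinear hF.hasFDerivAt hG.hasFDerivAt).differentiableAt

lemma DifferentiableAt.cross3 (hF : DifferentiableAt ℝ F w) (hG : DifferentiableAt ℝ G w) :
    DifferentiableAt ℝ (fun y => cross3 (F y) (G y)) w :=
  (cross3L.hasFDerivAt_of_bilinear hF.hasFDerivAt hG.hasFDerivAt).differentiableAt

lemma fderiv_dot3_apply (hF : DifferentiableAt ℝ F w) (hG : DifferentiableAt ℝ G w) (e : E) :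
    fderiv ℝ (fun y => dot3 (F y) (G y)) w e =
      dot3 (fderiv ℝ F w e) (G w) + dot3 (F w) (fderiv ℝ G w e) := by
  simp only [← dot3L_apply, dot3L.fderiv_of_bilinear hF hG]
  simp [add_comm]

lemma Filter.EventuallyEq.fderiv_dot3_apply {f : E → ℝ}
    (h : f =ᶠ[𝓝 w] fun y => dot3 (F y) (G y))
    (hF : DifferentiableAt ℝ F w) (hG : DifferentiableAt ℝ G w) (e : E) :
    fderiv ℝ f w e = dot3 (fderiv ℝ F w e) (G w) + dot3 (F w) (fderiv ℝ G w e) := by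
  rw [h.fderiv_eq, _root_.fderiv_dot3_apply hF hG]

lemma ContDiffAt.fderiv_apply_const {F' : Type*} [NormedAddCommGroup F'] [NormedSpace ℝ F']
    {f : E → F'} {m n : WithTop ℕ∞} (hf : ContDiffAt ℝ n f w) (hmn : m + 1 ≤ n) (e : E) :
    ContDiffAt ℝ m (fun y => fderiv ℝ f y e) w :=
  (hf.fderiv_right hmn).clm_apply contDiffAt_const

end Calculus

lemma du_dv_comm {g : ℝ × ℝ → R3} {y : ℝ × ℝ} (hg : ContDiffAt ℝ 2 g y) :
    du (dv g) y = dv (du g) y := by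
  have hd : DifferentiableAt ℝ (fderiv ℝ g) y :=
    (hg.fderiv_right le_rfl).differentiableAt one_ne_zero
  change fderiv ℝ (fun z => fderiv ℝ g z ((0 : ℝ), (1 : ℝ))) y ((1 : ℝ), (0 : ℝ)) =
    fderiv ℝ (fun z => fderiv ℝ g z ((1 : ℝ), (0 : ℝ))) y ((0 : ℝ), (1 : ℝ))
  simp only [fderiv_clm_apply hd (differentiableAt_const _)]
  simpa using hg.isSymmSndFDerivAt (by simp) ((1 : ℝ), (0 : ℝ)) ((0 : ℝ), (1 : ℝ))

lemma mul_dot3_eq_of_conformal_frame {p q N v : R3} (hpq : dot3 p q = 0) (hqq : dot3 q q = dot3 p p)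
    (hp : dot3 p p ≠ 0) (hN : N = (dot3 p p)⁻¹ • cross3 p q) (hvN : dot3 v N = 0) (z : R3) :
    dot3 p p * dot3 z v = dot3 z p * dot3 v p + dot3 z q * dot3 v q := by
  have hvn : dot3 v (cross3 p q) = 0 := by
    rw [hN, dot3_smul_right] at hvN
    simpa [hp] using hvN
  have key := dot3_cross3_self_mul_dot3 p q v z
  rw [dot3_cross3_cross3, hpq, hqq, hvn] at key
  apply mul_left_cancel₀ hp
  linear_combination key

def IsConformalImmersionAt (x : ℝ × ℝ → R3) (w : ℝ × ℝ) : Prop :=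
  dot3 (du x w) (du x w) = dot3 (dv x w) (dv x w) ∧ dot3 (du x w) (dv x w) = 0 ∧
    0 < dot3 (du x w) (du x w)

lemma dot3_du_Nf (x : ℝ × ℝ → R3) (y : ℝ × ℝ) : dot3 (du x y) (Nf x y) = 0 := by
  rw [Nf, dot3_smul_right, dot3_cross3_self_left, mul_zero]

lemma dot3_dv_Nf (x : ℝ × ℝ → R3) (y : ℝ × ℝ) : dot3 (dv x y) (Nf x y) = 0 := by
  rw [Nf, dot3_smul_right, dot3_cross3_self_right, mul_zero]

namespace IsConformalImmersionAt

variable {x : ℝ × ℝ → R3} {y : ℝ × ℝ}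

lemma dot3_cross3 (h : IsConformalImmersionAt x y) :
    dot3 (cross3 (du x y) (dv x y)) (cross3 (du x y) (dv x y)) = dot3 (du x y) (du x y) ^ 2 := by
  rw [dot3_cross3_cross3, ← h.1, h.2.1]; ring

lemma Wf_eq (h : IsConformalImmersionAt x y) : Wf x y = dot3 (du x y) (du x y) := by
  rw [Wf, norm3, h.dot3_cross3, Real.sqrt_sq h.2.2.le]

lemma Nf_eq (h : IsConformalImmersionAt x y) :
    Nf x y = (dot3 (du x y) (du x y))⁻¹ • cross3 (du x y) (dv x y) := by
  rw [Nf, h.Wf_eq]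

lemma dot3_Nf_self (h : IsConformalImmersionAt x y) : dot3 (Nf x y) (Nf x y) = 1 := by
  have hP := h.2.2.ne'
  rw [h.Nf_eq, dot3_smul_left, dot3_smul_right, h.dot3_cross3]
  field_simp

lemma differentiableAt_Nf (h : IsConformalImmersionAt x y) (hu : DifferentiableAt ℝ (du x) y)
    (hv : DifferentiableAt ℝ (dv x) y) : DifferentiableAt ℝ (Nf x) y := by
  have hn := hu.cross3 hv
  have hW : DifferentiableAt ℝ (Wf x) y := by
    refine (hn.dot3 hn).sqrt ?_
    rw [h.dot3_cross3]
    exact (pow_pos h.2.2 2).ne'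
  exact (hW.inv (h.Wf_eq ▸ h.2.2.ne')).smul hn

end IsConformalImmersionAt

section Conformal

variable {x : ℝ × ℝ → R3} {w : ℝ × ℝ}

lemma conformal_christoffel (hx : ContDiffAt ℝ 2 x w)
    (hconf : ∀ᶠ y in 𝓝 w, IsConformalImmersionAt x y) :
    2 * dot3 (du (du x) w) (du x w) = duS (Wf x) w ∧
    2 * dot3 (du (du x) w) (dv x w) = -dvS (Wf x) w ∧
    2 * dot3 (dv (du x) w) (du x w) = dvS (Wf x) w ∧
    2 * dot3 (dv (du x) w) (dv x w) = duS (Wf x) w ∧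
    2 * dot3 (dv (dv x) w) (du x w) = -duS (Wf x) w ∧
    2 * dot3 (dv (dv x) w) (dv x w) = dvS (Wf x) w := by
  have hp : DifferentiableAt ℝ (du x) w :=
    (hx.fderiv_apply_const (m := 1) le_rfl _).differentiableAt one_ne_zero
  have hq : DifferentiableAt ℝ (dv x) w :=
    (hx.fderiv_apply_const (m := 1) le_rfl _).differentiableAt one_ne_zero
  have hWp : Wf x =ᶠ[𝓝 w] fun y => dot3 (du x y) (du x y) := hconf.mono fun y hy => hy.Wf_eq
  have hWq : Wf x =ᶠ[𝓝 w] fun y => dot3 (dv x y) (dv x y) :=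
    hconf.mono fun y hy => hy.Wf_eq.trans hy.1
  have hpq : (fun _ => (0 : ℝ)) =ᶠ[𝓝 w] fun y => dot3 (du x y) (dv x y) :=
    hconf.mono fun y hy => hy.2.1.symm
  have Wu_p : duS (Wf x) w = dot3 (du (du x) w) (du x w) + dot3 (du x w) (du (du x) w) :=
    hWp.fderiv_dot3_apply hp hp _
  have Wv_p : dvS (Wf x) w = dot3 (dv (du x) w) (du x w) + dot3 (du x w) (dv (du x) w) :=
    hWp.fderiv_dot3_apply hp hp _
  have Wu_q : duS (Wf x) w = dot3 (du (dv x) w) (dv x w) + dot3 (dv x w) (du (dv x) w) :=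
    hWq.fderiv_dot3_apply hq hq _
  have Wv_q : dvS (Wf x) w = dot3 (dv (dv x) w) (dv x w) + dot3 (dv x w) (dv (dv x) w) :=
    hWq.fderiv_dot3_apply hq hq _
  have pq_u : dot3 (du (du x) w) (dv x w) + dot3 (du x w) (du (dv x) w) = 0 :=
    (hpq.fderiv_dot3_apply hp hq _).symm.trans (by simp)
  have pq_v : dot3 (dv (du x) w) (dv x w) + dot3 (du x w) (dv (dv x) w) = 0 :=
    (hpq.fderiv_dot3_apply hp hq _).symm.trans (by simp)
  rw [du_dv_comm hx] at Wu_q pq_u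
  simp only [dot3_comm (du x w), dot3_comm (dv x w)] at Wu_p Wv_p Wu_q Wv_q pq_u pq_v ⊢
  refine ⟨?_, ?_, ?_, ?_, ?_, ?_⟩ <;> linarith

lemma conformal_weingarten (hconf : ∀ᶠ y in 𝓝 w, IsConformalImmersionAt x y)
    (hp : DifferentiableAt ℝ (du x) w) (hq : DifferentiableAt ℝ (dv x) w) (e : ℝ × ℝ) (z : R3) :
    Wf x w * dot3 z (fderiv ℝ (Nf x) w e) =
      -(dot3 (fderiv ℝ (du x) w e) (Nf x w) * dot3 z (du x w) +
        dot3 (fderiv ℝ (dv x) w e) (Nf x w) * dot3 z (dv x w)) := by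
  have hw := hconf.self_of_nhds
  have hN := hw.differentiableAt_Nf hp hq
  have hNN : (fun _ => (1 : ℝ)) =ᶠ[𝓝 w] fun y => dot3 (Nf x y) (Nf x y) :=
    hconf.mono fun y hy => hy.dot3_Nf_self.symm
  have hNp : (fun _ => (0 : ℝ)) =ᶠ[𝓝 w] fun y => dot3 (du x y) (Nf x y) :=
    .of_forall fun y => (dot3_du_Nf x y).symm
  have hNq : (fun _ => (0 : ℝ)) =ᶠ[𝓝 w] fun y => dot3 (dv x y) (Nf x y) :=
    .of_forall fun y => (dot3_dv_Nf x y).symm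
  set v := fderiv ℝ (Nf x) w e
  have hvN : dot3 v (Nf x w) + dot3 (Nf x w) v = 0 :=
    (hNN.fderiv_dot3_apply hN hN e).symm.trans (by simp)
  have hvp : dot3 (fderiv ℝ (du x) w e) (Nf x w) + dot3 (du x w) v = 0 :=
    (hNp.fderiv_dot3_apply hp hN e).symm.trans (by simp)
  have hvq : dot3 (fderiv ℝ (dv x) w e) (Nf x w) + dot3 (dv x w) v = 0 :=
    (hNq.fderiv_dot3_apply hq hN e).symm.trans (by simp)
  rw [dot3_comm (Nf x w)] at hvN
  rw [dot3_comm (du x w)] at hvp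
  rw [dot3_comm (dv x w)] at hvq
  rw [hw.Wf_eq, mul_dot3_eq_of_conformal_frame hw.2.1 hw.1.symm hw.2.2.ne' hw.Nf_eq (by linarith)]
  linear_combination (dot3 z (du x w)) * hvp + (dot3 z (dv x w)) * hvq

end Conformal

lemma dvS_dot3_du_sub_duS_dot3_dv {G N : ℝ × ℝ → R3} {w : ℝ × ℝ} (hG : ContDiffAt ℝ 2 G w)
    (hN : DifferentiableAt ℝ N w) :
    dvS (fun y => dot3 (du G y) (N y)) w - duS (fun y => dot3 (dv G y) (N y)) w =
      dot3 (du G w) (dv N w) - dot3 (dv G w) (du N w) := by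
  have hu : DifferentiableAt ℝ (du G) w :=
    (hG.fderiv_apply_const (m := 1) le_rfl _).differentiableAt one_ne_zero
  have hv : DifferentiableAt ℝ (dv G) w :=
    (hG.fderiv_apply_const (m := 1) le_rfl _).differentiableAt one_ne_zero
  have h3 : dv (du G) w = du (dv G) w := (du_dv_comm hG).symm
  change fderiv ℝ _ w _ - fderiv ℝ _ w _ = _
  rw [fderiv_dot3_apply hu hN, fderiv_dot3_apply hv hN]
  change dot3 (dv (du G) w) _ + _ - (dot3 (du (dv G) w) _ + _) = _
  rw [h3]
  exact add_sub_add_left_eq_sub _ _ _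

theorem codazzi_mainardi_at {x : ℝ × ℝ → R3} {w : ℝ × ℝ} (hx : ContDiffAt ℝ 3 x w)
    (hconf : ∀ᶠ y in 𝓝 w, IsConformalImmersionAt x y) :
    dvS (h21 x) w - duS (h22 x) w + duS (Wf x) w * Hmean x w = 0 ∧
      dvS (h11 x) w - duS (h12 x) w - dvS (Wf x) w * Hmean x w = 0 := by
  have hx2 : ContDiffAt ℝ 2 x w := hx.of_le (by norm_num)
  have hdu : ContDiffAt ℝ 2 (du x) w := hx.fderiv_apply_const (by norm_num) _
  have hdv : ContDiffAt ℝ 2 (dv x) w := hx.fderiv_apply_const (by norm_num) _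
  have hp := hdu.differentiableAt two_ne_zero
  have hq := hdv.differentiableAt two_ne_zero
  have hN := hconf.self_of_nhds.differentiableAt_Nf hp hq
  have hW : Wf x w ≠ 0 := hconf.self_of_nhds.Wf_eq ▸ hconf.self_of_nhds.2.2.ne'
  have hb : du (dv x) w = dv (du x) w := du_dv_comm hx2
  have hsymm : h21 x w = h12 x w := by rw [h21, h12, hb]
  obtain ⟨c1, c2, c3, c4, c5, c6⟩ := conformal_christoffel hx2 hconf
  have Nu : ∀ z, Wf x w * dot3 z (du (Nf x) w) =
      -(h11 x w * dot3 z (du x w) + h21 x w * dot3 z (dv x w)) := conformal_weingarten hconf hp hq _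
  have Nv : ∀ z, Wf x w * dot3 z (dv (Nf x) w) =
      -(h12 x w * dot3 z (du x w) + h22 x w * dot3 z (dv x w)) := conformal_weingarten hconf hp hq _
  have cod1 : dvS (h21 x) w - duS (h22 x) w =
      dot3 (du (dv x) w) (dv (Nf x) w) - dot3 (dv (dv x) w) (du (Nf x) w) :=
    dvS_dot3_du_sub_duS_dot3_dv hdv hN
  have cod2 : dvS (h11 x) w - duS (h12 x) w =
      dot3 (du (du x) w) (dv (Nf x) w) - dot3 (dv (du x) w) (du (Nf x) w) :=
    dvS_dot3_du_sub_duS_dot3_dv hdu hN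
  rw [Hmean, cod1, cod2, hb]
  constructor
  · have e1 := Nv (dv (du x) w)
    have e2 := Nu (dv (dv x) w)
    field_simp
    linear_combination 2 * (e1 - e2) + h11 x w * c5 - h22 x w * c4 - h12 x w * c3 + h21 x w * c6 +
      dvS (Wf x) w * hsymm
  · have e1 := Nv (du (du x) w)
    have e2 := Nu (dv (du x) w)
    field_simp
    linear_combination 2 * (e1 - e2) - h12 x w * c1 - h22 x w * c2 + h11 x w * c3 +
      h21 x w * c4 + duS (Wf x) w * hsymm

/-- For a `C³` conformal immersion `x` on an open set `U ⊂ ℝ²` the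
Codazzi–Mainardi equations hold in the form
`∂_v h₂₁ − ∂_u h₂₂ + W_u H = 0` and `∂_v h₁₁ − ∂_u h₁₂ − W_v H = 0` on `U`. -/
theorem codazzi_mainardi (U : Set (ℝ × ℝ)) (hU : IsOpen U) (x : ℝ × ℝ → R3)
    (hx : ContDiffOn ℝ 3 x U)
    (hconf : ∀ w ∈ U,
      dot3 (du x w) (du x w) = dot3 (dv x w) (dv x w) ∧
      dot3 (du x w) (dv x w) = 0 ∧ 0 < dot3 (du x w) (du x w)) :
    ∀ w ∈ U,
      dvS (h21 x) w - duS (h22 x) w + duS (Wf x) w * Hmean x w = 0 ∧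
      dvS (h11 x) w - duS (h12 x) w - dvS (Wf x) w * Hmean x w = 0 := fun _ hw =>
  codazzi_mainardi_at (hx.contDiffAt (hU.mem_nhds hw)) (eventually_of_mem (hU.mem_nhds hw) hconf)
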